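/- Let (A,C,ψ) be an entwining structure and r ≥ 1. The generalized trace tr: C ⊗ M_r(A)^{⊗(n+1)} → C ⊗ A^{⊗(n+1)}, tr(c ⊗ a₁u₁ ⊗ ... ⊗ a_{n+1}u_{n+1}) = tr(u₁ ⋯ u_{n+1}) · (c ⊗ a₁ ⊗ ... ⊗ a_{n+1}) (for aᵢ ∈ A, uᵢ ∈ M_r(k)), commutes with all face maps d_i of the presimplicial modules C_•(M_r(A),C,ψ) and C_•(A,C,ψ), where d₀(c, x₁,...,x_{n+1}) = (c^ψ, x₂,...,x_{n+1}x_{1ψ}) and d_i(c, x₁,...,x_{n+1}) = (c, x₁,...,x_i x_{i+1},...,x_{n+1}) for 0 < i ≤ n. Hence tr is a morphism of complexes. -/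

import Mathlib

open TensorProduct

/-- An entwining structure `(A, C, ψ)` over a field `k`: a unital `k`-algebra `A`,
a counital `k`-coalgebra `C` and a `k`-linear map `ψ : C ⊗ A → A ⊗ C` satisfying the
entwining axioms of Brzeziński–Majid. -/
structure Entwining (k A C : Type) [Field k] [Ring A] [Algebra k A]
    [AddCommGroup C] [Module k C] [Coalgebra k C] : Type where
  ψ : C ⊗[k] A →ₗ[k] A ⊗[k] C
  mul_compat : ψ ∘ₗ TensorProduct.map (LinearMap.id : C →ₗ[k] C) (LinearMap.mul' k A) =
    TensorProduct.map (LinearMap.mul' k A) (LinearMap.id : C →ₗ[k] C)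
      ∘ₗ (TensorProduct.assoc k A A C).symm.toLinearMap
      ∘ₗ TensorProduct.map (LinearMap.id : A →ₗ[k] A) ψ
      ∘ₗ (TensorProduct.assoc k A C A).toLinearMap
      ∘ₗ TensorProduct.map ψ (LinearMap.id : A →ₗ[k] A)
      ∘ₗ (TensorProduct.assoc k C A A).symm.toLinearMap
  comul_compat : TensorProduct.map (LinearMap.id : A →ₗ[k] A)
        (CoalgebraStruct.comul (R := k) (A := C)) ∘ₗ ψ =
    (TensorProduct.assoc k A C C).toLinearMap
      ∘ₗ TensorProduct.map ψ (LinearMap.id : C →ₗ[k] C)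
      ∘ₗ (TensorProduct.assoc k C A C).symm.toLinearMap
      ∘ₗ TensorProduct.map (LinearMap.id : C →ₗ[k] C) ψ
      ∘ₗ (TensorProduct.assoc k C C A).toLinearMap
      ∘ₗ TensorProduct.map (CoalgebraStruct.comul (R := k) (A := C)) (LinearMap.id : A →ₗ[k] A)
  counit_compat : (TensorProduct.rid k A).toLinearMap
      ∘ₗ TensorProduct.map (LinearMap.id : A →ₗ[k] A)
        (CoalgebraStruct.counit (R := k) (A := C)) ∘ₗ ψ =
    (TensorProduct.lid k A).toLinearMap
      ∘ₗ TensorProduct.map (CoalgebraStruct.counit (R := k) (A := C)) (LinearMap.id : A →ₗ[k] A)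
  unit_compat : ∀ c : C, ψ (c ⊗ₜ[k] (1 : A)) = (1 : A) ⊗ₜ[k] c

open PiTensorProduct

/-- The vector `(a₁, …, aᵢaᵢ₊₁, …, a_{n+2})` obtained by multiplying the adjacent
entries at positions `i, i+1` (0-indexed). -/
def mergeVec {A : Type} [Mul A] {n : ℕ} (v : Fin (n + 2) → A) (i : Fin (n + 1)) :
    Fin (n + 1) → A :=
  fun j => if j.castSucc < i.castSucc then v j.castSucc
    else if j = i then v i.castSucc * v i.succ else v j.succ

/-- `d` realises the `i`-th face map `dᵢ : C ⊗ B^{⊗(m+2)} → C ⊗ B^{⊗(m+1)}` of the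
presimplicial module associated to an entwining map `ψ` on `B`:
`d₀(c, b₁, …, b_{m+2}) = (c^ψ, b₂, …, b_{m+2} b_{1ψ})` (stated for every representation
`ψ(c ⊗ b₁) = Σ αᵢ ⊗ γᵢ`) and `dᵢ(c, b₁, …, b_{m+2}) = (c, b₁, …, bᵢbᵢ₊₁, …, b_{m+2})`
for `0 < i ≤ m + 1`. -/
def IsFaceMap {k B C : Type} [Field k] [Ring B] [Algebra k B] [AddCommGroup C] [Module k C]
    (ψ : C ⊗[k] B →ₗ[k] B ⊗[k] C) {m : ℕ} (i : Fin (m + 2))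
    (d : (C ⊗[k] (⨂[k] (_ : Fin (m + 2)), B)) →ₗ[k] (C ⊗[k] (⨂[k] (_ : Fin (m + 1)), B))) :
    Prop :=
  if h : i = 0 then
    ∀ (c : C) (v : Fin (m + 2) → B) (t : ℕ) (α : Fin t → B) (γ : Fin t → C),
      ψ (c ⊗ₜ[k] v 0) = ∑ s, α s ⊗ₜ[k] γ s →
      d (c ⊗ₜ[k] (PiTensorProduct.tprod k) v) =
        ∑ s, γ s ⊗ₜ[k] (PiTensorProduct.tprod k)
          (Function.update (fun j : Fin (m + 1) => v j.succ) (Fin.last m)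
            (v (Fin.last (m + 1)) * α s))
  else
    ∀ (c : C) (v : Fin (m + 2) → B),
      d (c ⊗ₜ[k] (PiTensorProduct.tprod k) v) =
        c ⊗ₜ[k] (PiTensorProduct.tprod k) (mergeVec v (i.pred h))

/-- `tr` realises the generalized trace map
`C ⊗ M_r(A)^{⊗m} → C ⊗ A^{⊗m}`,
`c ⊗ a₁u₁ ⊗ ⋯ ⊗ a_mu_m ↦ tr(u₁ ⋯ u_m) · (c ⊗ a₁ ⊗ ⋯ ⊗ a_m)` for `aᵢ ∈ A` and
`uᵢ ∈ M_r(k)`. -/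
def IsGenTrace {k A C : Type} [Field k] [Ring A] [Algebra k A] [AddCommGroup C]
    [Module k C] (r : ℕ) {m : ℕ}
    (tr : (C ⊗[k] (⨂[k] (_ : Fin m), Matrix (Fin r) (Fin r) A)) →ₗ[k]
      (C ⊗[k] (⨂[k] (_ : Fin m), A))) : Prop :=
  ∀ (c : C) (a : Fin m → A) (u : Fin m → Matrix (Fin r) (Fin r) k),
    tr (c ⊗ₜ[k] (PiTensorProduct.tprod k)
        (fun i => Matrix.of fun p q => u i p q • a i)) =
      Matrix.trace (List.ofFn u).prod • (c ⊗ₜ[k] (PiTensorProduct.tprod k) a)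

/-! On a generator `c ⊗ a₁u₁ ⊗ ⋯ ⊗ a_{m+2}u_{m+2}` both composites can be computed. Since
`(a u)(a' u') = (a a')(u u')`, an inner face `dᵢ` multiplies the `a`'s and the `u`'s simultaneously
and leaves the product `u₁ ⋯ u_{m+2}` unchanged. The matrix entwining acts on `a₁u₁` through `a₁`
alone, so `d₀` moves `u₁` from the front of the product to its back, which the trace does not
see. These generators span `C ⊗ M_r(A)^{⊗(m+2)}`, and all maps involved are linear. -/

open Function

section Monoid

variable {M : Type}

theorem mergeVec_zero [Mul M] {n : ℕ} (v : Fin (n + 2) → M) :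
    mergeVec v 0 = Fin.cons (v 0 * v 1) (fun j : Fin n => v j.succ.succ) := by
  funext j
  refine Fin.cases ?_ (fun j => ?_) j
  · simp [mergeVec]
  · simp [mergeVec, Fin.succ_ne_zero]

theorem mergeVec_succ [Mul M] {n : ℕ} (v : Fin (n + 3) → M) (i : Fin (n + 1)) :
    mergeVec v i.succ = Fin.cons (v 0) (mergeVec (fun j => v j.succ) i) := by
  funext j
  refine Fin.cases ?_ (fun j => ?_) j
  · simp [mergeVec, Fin.lt_def]
  · simp only [mergeVec, Fin.cons_succ, Fin.castSucc_lt_castSucc_iff, Fin.succ_lt_succ_iff,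
      Fin.succ_inj, ← Fin.succ_castSucc]

theorem mergeVec_map₂ {N P : Type} [Mul M] [Mul N] [Mul P] (f : M → N → P)
    (hf : ∀ x x' y y', f x y * f x' y' = f (x * x') (y * y')) {n : ℕ}
    (u : Fin (n + 2) → M) (a : Fin (n + 2) → N) (i : Fin (n + 1)) :
    mergeVec (fun j => f (u j) (a j)) i = fun j => f (mergeVec u i j) (mergeVec a i j) := by
  funext j
  unfold mergeVec
  split_ifs <;> simp only [hf]

theorem prod_ofFn_mergeVec [Monoid M] {n : ℕ} (v : Fin (n + 2) → M) (i : Fin (n + 1)) :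
    (List.ofFn (mergeVec v i)).prod = (List.ofFn v).prod := by
  induction n with
  | zero =>
    rw [Fin.fin_one_eq_zero i, mergeVec_zero]
    simp [List.ofFn_succ]
  | succ n ih =>
    cases i using Fin.cases with
    | zero => simp [mergeVec_zero, List.ofFn_succ, mul_assoc]
    | succ i =>
      rw [mergeVec_succ, List.ofFn_succ, List.ofFn_succ (f := v)]
      simp only [Fin.cons_zero, Fin.cons_succ, List.prod_cons, ih]

theorem prod_ofFn_update_last_mul [Monoid M] {n : ℕ} (v : Fin (n + 1) → M) (x : M) :
    (List.ofFn (update v (Fin.last n) (v (Fin.last n) * x))).prod = (List.ofFn v).prod * x := by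
  have hinit (j : Fin n) :
      update v (Fin.last n) (v (Fin.last n) * x) j.castSucc = v j.castSucc :=
    update_of_ne (Fin.castSucc_lt_last j).ne _ _
  simp only [List.ofFn_succ', List.prod_concat, hinit, update_self, mul_assoc]

end Monoid

theorem Matrix.trace_prod_ofFn_rotate {R n : Type} [CommSemiring R] [Fintype n]
    [DecidableEq n] {m : ℕ} (u : Fin (m + 2) → Matrix n n R) :
    trace (List.ofFn (update (fun j : Fin (m + 1) => u j.succ) (Fin.last m)
      (u (Fin.last (m + 1)) * u 0))).prod = trace (List.ofFn u).prod := by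
  have hrotate := prod_ofFn_update_last_mul (fun j : Fin (m + 1) => u j.succ) (u 0)
  simp only [Fin.succ_last] at hrotate
  rw [hrotate, trace_mul_comm, ← List.prod_cons, ← List.ofFn_succ]

section ElementaryMatrices

variable {k A n : Type} [CommSemiring k] [Semiring A] [Algebra k A]

-- `u.map (· • a)` is the element written `a u`, i.e. `a ⊗ u ∈ A ⊗ M_r(k) = M_r(A)`.

theorem Matrix.map_smul_mul_map_smul [Fintype n] (u u' : Matrix n n k) (a a' : A) :
    u.map (· • a) * u'.map (· • a') = (u * u').map (· • (a * a')) := by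
  ext p q
  simp only [mul_apply, map_apply, smul_mul_smul_comm, Finset.sum_smul]

theorem Matrix.single_one_map_smul [DecidableEq n] (p q : n) (a : A) :
    (single p q (1 : k)).map (· • a) = single p q a := by
  ext p' q'
  by_cases h : p = p' ∧ q = q' <;> simp [h]

theorem Matrix.eq_sum_single_apply [Fintype n] [DecidableEq n] (x : Matrix n n A) :
    x = ∑ pq : n × n, single pq.1 pq.2 (x pq.1 pq.2) := by
  rw [Fintype.sum_prod_type]
  exact matrix_eq_sum_single x

theorem LinearMap.ext_tmul_tprod_map_smul [Fintype n] [DecidableEq n] {ι C M : Type}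
    [Fintype ι] [DecidableEq ι] [AddCommMonoid C] [Module k C] [AddCommMonoid M] [Module k M]
    {f g : C ⊗[k] (⨂[k] _ : ι, Matrix n n A) →ₗ[k] M}
    (h : ∀ (c : C) (u : ι → Matrix n n k) (a : ι → A),
      f (c ⊗ₜ tprod k fun j => (u j).map (· • a j)) =
        g (c ⊗ₜ tprod k fun j => (u j).map (· • a j))) :
    f = g := by
  refine TensorProduct.ext' fun c z => ?_
  induction z using PiTensorProduct.induction_on with
  | smul_tprod κ v =>
    have hv : tprod k v = ∑ σ : ι → n × n,
        tprod k fun j => (Matrix.single (σ j).1 (σ j).2 (1 : k)).map (· • v j (σ j).1 (σ j).2) := by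
      simp only [Matrix.single_one_map_smul]
      conv_lhs => rw [funext fun j => Matrix.eq_sum_single_apply (v j)]
      exact MultilinearMap.map_sum _ _
    simp only [tmul_smul, map_smul, hv, tmul_sum, map_sum, h]
  | add x y hx hy => simp only [tmul_add, map_add, hx, hy]

end ElementaryMatrices

section Faces

variable {k A C : Type} [Field k] [Ring A] [Algebra k A] [AddCommGroup C] [Module k C] {r m : ℕ}

theorem IsFaceMap.apply_zero {B : Type} [Ring B] [Algebra k B] {ψ : C ⊗[k] B →ₗ[k] B ⊗[k] C}
    {d : (C ⊗[k] (⨂[k] (_ : Fin (m + 2)), B)) →ₗ[k] (C ⊗[k] (⨂[k] (_ : Fin (m + 1)), B))}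
    (hd : IsFaceMap ψ 0 d) {c : C} {v : Fin (m + 2) → B} {t : ℕ} {α : Fin t → B}
    {γ : Fin t → C} (hψ : ψ (c ⊗ₜ[k] v 0) = ∑ s, α s ⊗ₜ[k] γ s) :
    d (c ⊗ₜ[k] tprod k v) =
      ∑ s, γ s ⊗ₜ[k] tprod k (update (fun j : Fin (m + 1) => v j.succ) (Fin.last m)
        (v (Fin.last (m + 1)) * α s)) := by
  rw [IsFaceMap, dif_pos rfl] at hd
  exact hd c v t α γ hψ

theorem IsFaceMap.apply_of_ne_zero {B : Type} [Ring B] [Algebra k B]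
    {ψ : C ⊗[k] B →ₗ[k] B ⊗[k] C} {i : Fin (m + 2)}
    {d : (C ⊗[k] (⨂[k] (_ : Fin (m + 2)), B)) →ₗ[k] (C ⊗[k] (⨂[k] (_ : Fin (m + 1)), B))}
    (hd : IsFaceMap ψ i d) (hi : i ≠ 0) (c : C) (v : Fin (m + 2) → B) :
    d (c ⊗ₜ[k] tprod k v) = c ⊗ₜ[k] tprod k (mergeVec v (i.pred hi)) := by
  rw [IsFaceMap, dif_neg hi] at hd
  exact hd c v

theorem IsGenTrace.apply_map_smul
    {tr : (C ⊗[k] (⨂[k] (_ : Fin m), Matrix (Fin r) (Fin r) A)) →ₗ[k]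
      (C ⊗[k] (⨂[k] (_ : Fin m), A))}
    (htr : IsGenTrace r tr) (c : C) (u : Fin m → Matrix (Fin r) (Fin r) k) (a : Fin m → A) :
    tr (c ⊗ₜ[k] tprod k fun j => (u j).map (· • a j)) =
      Matrix.trace (List.ofFn u).prod • (c ⊗ₜ[k] tprod k a) :=
  htr c a u

def IsMatrixEntwining (ψ : C ⊗[k] A →ₗ[k] A ⊗[k] C)
    (ψM : C ⊗[k] Matrix (Fin r) (Fin r) A →ₗ[k] Matrix (Fin r) (Fin r) A ⊗[k] C) : Prop :=
  ∀ (c : C) (a : A) (p q : Fin r) (t : ℕ) (α : Fin t → A) (γ : Fin t → C),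
    ψ (c ⊗ₜ[k] a) = ∑ i, α i ⊗ₜ[k] γ i →
    ψM (c ⊗ₜ[k] Matrix.single p q a) = ∑ i, Matrix.single p q (α i) ⊗ₜ[k] γ i

variable {ψ : C ⊗[k] A →ₗ[k] A ⊗[k] C}
  {ψM : C ⊗[k] Matrix (Fin r) (Fin r) A →ₗ[k] Matrix (Fin r) (Fin r) A ⊗[k] C}

theorem IsMatrixEntwining.tmul_map_smul (hψM : IsMatrixEntwining ψ ψM)
    {c : C} {a : A} (u : Matrix (Fin r) (Fin r) k) {t : ℕ} {α : Fin t → A} {γ : Fin t → C}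
    (hψ : ψ (c ⊗ₜ[k] a) = ∑ s, α s ⊗ₜ[k] γ s) :
    ψM (c ⊗ₜ[k] u.map (· • a)) = ∑ s, u.map (· • α s) ⊗ₜ[k] γ s := by
  have hψ_smul (κ : k) : ψ (c ⊗ₜ[k] (κ • a)) = ∑ s, (κ • α s) ⊗ₜ[k] γ s := by
    rw [tmul_smul, map_smul, hψ, Finset.smul_sum]
    simp only [smul_tmul']
  rw [Matrix.eq_sum_single_apply (u.map (· • a))]
  simp only [Matrix.map_apply, tmul_sum, map_sum,
    fun pq : Fin r × Fin r => hψM c _ pq.1 pq.2 t _ γ (hψ_smul (u pq.1 pq.2))]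
  rw [Finset.sum_comm]
  refine Finset.sum_congr rfl fun s _ => ?_
  rw [← sum_tmul, Matrix.eq_sum_single_apply (u.map (· • α s))]
  rfl

variable
  {dM : (C ⊗[k] (⨂[k] (_ : Fin (m + 2)), Matrix (Fin r) (Fin r) A)) →ₗ[k]
    (C ⊗[k] (⨂[k] (_ : Fin (m + 1)), Matrix (Fin r) (Fin r) A))}
  {dA : (C ⊗[k] (⨂[k] (_ : Fin (m + 2)), A)) →ₗ[k] (C ⊗[k] (⨂[k] (_ : Fin (m + 1)), A))}
  {trHigh : (C ⊗[k] (⨂[k] (_ : Fin (m + 2)), Matrix (Fin r) (Fin r) A)) →ₗ[k]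
    (C ⊗[k] (⨂[k] (_ : Fin (m + 2)), A))}
  {trLow : (C ⊗[k] (⨂[k] (_ : Fin (m + 1)), Matrix (Fin r) (Fin r) A)) →ₗ[k]
    (C ⊗[k] (⨂[k] (_ : Fin (m + 1)), A))}

theorem IsFaceMap.comm_genTrace_zero
    (hψM : IsMatrixEntwining ψ ψM)
    (hdM : IsFaceMap ψM 0 dM) (hdA : IsFaceMap ψ 0 dA)
    (htrHigh : IsGenTrace r trHigh) (htrLow : IsGenTrace r trLow)
    (c : C) (u : Fin (m + 2) → Matrix (Fin r) (Fin r) k) (a : Fin (m + 2) → A) :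
    dA (trHigh (c ⊗ₜ[k] tprod k fun j => (u j).map (· • a j))) =
      trLow (dM (c ⊗ₜ[k] tprod k fun j => (u j).map (· • a j))) := by
  obtain ⟨t, α, γ, hψ⟩ := TensorProduct.exists_sum_tmul_eq (ψ (c ⊗ₜ[k] a 0))
  rw [htrHigh.apply_map_smul, map_smul, hdA.apply_zero hψ,
    hdM.apply_zero (hψM.tmul_map_smul (u 0) hψ), map_sum, Finset.smul_sum]
  refine Finset.sum_congr rfl fun s _ => ?_
  rw [Matrix.map_smul_mul_map_smul, ← funext (apply_update₂
    (fun _ (v : Matrix (Fin r) (Fin r) k) (b : A) => v.map (· • b)) (fun j => u j.succ)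
    (fun j => a j.succ) (Fin.last m) (u (Fin.last (m + 1)) * u 0) (a (Fin.last (m + 1)) * α s)),
    htrLow.apply_map_smul, Matrix.trace_prod_ofFn_rotate]

theorem IsFaceMap.comm_genTrace_of_ne_zero {i : Fin (m + 2)} (hi : i ≠ 0)
    (hdM : IsFaceMap ψM i dM) (hdA : IsFaceMap ψ i dA)
    (htrHigh : IsGenTrace r trHigh) (htrLow : IsGenTrace r trLow)
    (c : C) (u : Fin (m + 2) → Matrix (Fin r) (Fin r) k) (a : Fin (m + 2) → A) :
    dA (trHigh (c ⊗ₜ[k] tprod k fun j => (u j).map (· • a j))) =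
      trLow (dM (c ⊗ₜ[k] tprod k fun j => (u j).map (· • a j))) := by
  rw [htrHigh.apply_map_smul, map_smul, hdA.apply_of_ne_zero hi, hdM.apply_of_ne_zero hi,
    mergeVec_map₂ (fun (v : Matrix (Fin r) (Fin r) k) (b : A) => v.map (· • b))
      Matrix.map_smul_mul_map_smul,
    htrLow.apply_map_smul, prod_ofFn_mergeVec]

end Faces

theorem genTrace_chain_map_general
    [Field k] [Ring A] [Algebra k A] [AddCommGroup C] [Module k C] [Coalgebra k C]
    (e : Entwining k A C) (r : ℕ)
    (ψM : C ⊗[k] Matrix (Fin r) (Fin r) A →ₗ[k] Matrix (Fin r) (Fin r) A ⊗[k] C)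
    (hψM : ∀ (c : C) (a : A) (p q : Fin r) (t : ℕ) (α : Fin t → A) (γ : Fin t → C),
      e.ψ (c ⊗ₜ[k] a) = ∑ i, α i ⊗ₜ[k] γ i →
      ψM (c ⊗ₜ[k] Matrix.single p q a) =
        ∑ i, Matrix.single p q (α i) ⊗ₜ[k] γ i)
    (m : ℕ)
    (dM : ∀ _ : Fin (m + 2),
      (C ⊗[k] (⨂[k] (_ : Fin (m + 2)), Matrix (Fin r) (Fin r) A)) →ₗ[k]
        (C ⊗[k] (⨂[k] (_ : Fin (m + 1)), Matrix (Fin r) (Fin r) A)))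
    (dA : ∀ _ : Fin (m + 2),
      (C ⊗[k] (⨂[k] (_ : Fin (m + 2)), A)) →ₗ[k] (C ⊗[k] (⨂[k] (_ : Fin (m + 1)), A)))
    (hdM : ∀ i : Fin (m + 2), IsFaceMap ψM i (dM i))
    (hdA : ∀ i : Fin (m + 2), IsFaceMap e.ψ i (dA i))
    (trHigh : (C ⊗[k] (⨂[k] (_ : Fin (m + 2)), Matrix (Fin r) (Fin r) A)) →ₗ[k]
      (C ⊗[k] (⨂[k] (_ : Fin (m + 2)), A)))
    (trLow : (C ⊗[k] (⨂[k] (_ : Fin (m + 1)), Matrix (Fin r) (Fin r) A)) →ₗ[k]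
      (C ⊗[k] (⨂[k] (_ : Fin (m + 1)), A)))
    (htrHigh : IsGenTrace r trHigh) (htrLow : IsGenTrace r trLow) :
    ∀ i : Fin (m + 2), dA i ∘ₗ trHigh = trLow ∘ₗ dM i := by
  intro i
  refine LinearMap.ext_tmul_tprod_map_smul fun c u a => ?_
  rcases eq_or_ne i 0 with rfl | hi
  · exact IsFaceMap.comm_genTrace_zero hψM (hdM 0) (hdA 0) htrHigh htrLow c u a
  · exact IsFaceMap.comm_genTrace_of_ne_zero hi (hdM i) (hdA i) htrHigh htrLow c u a

/-- The generalized trace `tr : C ⊗ M_r(A)^{⊗(m+2)} → C ⊗ A^{⊗(m+2)}`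
commutes with all the face maps of the presimplicial modules `𝒞_•(M_r(A),C,ψ)` and
`𝒞_•(A,C,ψ)`; hence it is a morphism of complexes. -/
theorem genTrace_chain_map
    [Field k] [Ring A] [Algebra k A] [AddCommGroup C] [Module k C] [Coalgebra k C]
    (e : Entwining k A C) (r : ℕ) (hr : 0 < r)
    (ψM : C ⊗[k] Matrix (Fin r) (Fin r) A →ₗ[k] Matrix (Fin r) (Fin r) A ⊗[k] C)
    (hψM : ∀ (c : C) (a : A) (p q : Fin r) (t : ℕ) (α : Fin t → A) (γ : Fin t → C),
      e.ψ (c ⊗ₜ[k] a) = ∑ i, α i ⊗ₜ[k] γ i →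
      ψM (c ⊗ₜ[k] Matrix.single p q a) =
        ∑ i, Matrix.single p q (α i) ⊗ₜ[k] γ i)
    (m : ℕ)
    (dM : ∀ _ : Fin (m + 2),
      (C ⊗[k] (⨂[k] (_ : Fin (m + 2)), Matrix (Fin r) (Fin r) A)) →ₗ[k]
        (C ⊗[k] (⨂[k] (_ : Fin (m + 1)), Matrix (Fin r) (Fin r) A)))
    (dA : ∀ _ : Fin (m + 2),
      (C ⊗[k] (⨂[k] (_ : Fin (m + 2)), A)) →ₗ[k] (C ⊗[k] (⨂[k] (_ : Fin (m + 1)), A)))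
    (hdM : ∀ i : Fin (m + 2), IsFaceMap ψM i (dM i))
    (hdA : ∀ i : Fin (m + 2), IsFaceMap e.ψ i (dA i))
    (trHigh : (C ⊗[k] (⨂[k] (_ : Fin (m + 2)), Matrix (Fin r) (Fin r) A)) →ₗ[k]
      (C ⊗[k] (⨂[k] (_ : Fin (m + 2)), A)))
    (trLow : (C ⊗[k] (⨂[k] (_ : Fin (m + 1)), Matrix (Fin r) (Fin r) A)) →ₗ[k]
      (C ⊗[k] (⨂[k] (_ : Fin (m + 1)), A)))
    (htrHigh : IsGenTrace r trHigh) (htrLow : IsGenTrace r trLow) :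
    ∀ i : Fin (m + 2), dA i ∘ₗ trHigh = trLow ∘ₗ dM i :=
  genTrace_chain_map_general e r ψM hψM m dM dA hdM hdA trHigh trLow htrHigh htrLow
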